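/- arXiv:2304.12868 — 2 statements merged into one kernel-verified Lean document; each statement's English description precedes it below -/
import Mathlib

section
/- Let p be a prime, t₀ ∈ ℤ_p, and t : {1,…,m} → ℤ_p, and suppose the map (γ₁,…,γ_m) ∈ {0,1,2}^m ↦ 2t₀ + Σᵢ γᵢtᵢ ∈ ℤ_p is injective. Then the number of ordered quadruples (S₁, S₂, S₃, S₄) of subsets of {1,…,m} satisfying (t₀ + Σ_{i∈S₁} tᵢ) + (t₀ + Σ_{i∈S₂} tᵢ) = (t₀ + Σ_{i∈S₃} tᵢ) + (t₀ + Σ_{i∈S₄} tᵢ) in ℤ_p equals Σ_{j=0}^{m} C(m, j) · 2^{m+j} = 6^m. Equivalently, the additive energy E(A, A) of the set A = { t₀ + Σ_{i∈S} tᵢ : S ⊆ {1,…,m} } equals 6^m. -/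
/-!
A sum of two elements of `A` is `2t₀ + Σᵢ γᵢtᵢ` with `γᵢ = [i ∈ S₁] + [i ∈ S₂] ∈ {0,1,2}`, so
properness of `B` turns `a₁ + a₂ = a₃ + a₄` into the coordinatewise equations
`[i ∈ S₁] + [i ∈ S₂] = [i ∈ S₃] + [i ∈ S₄]`. These constrain the coordinates independently,
each having `6` solutions in `{0,1}⁴`, whence `6^m` quadruples. Properness also makes
`S ↦ t₀ + Σ_{i∈S} tᵢ` injective, so `E(A,A)` counts the same quadruples.
-/

open Finset

/-- Additive energy `E(A,A) = #{(a,b,a',b') ∈ A⁴ : a + b = a' + b'}`. -/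
def addEnergy (p : ℕ) (A : Finset (ZMod p)) : ℕ :=
  ((A ×ˢ A ×ˢ A ×ˢ A).filter
    (fun x => x.1 + x.2.1 = x.2.2.1 + x.2.2.2)).card

lemma sum_range_choose_mul_two_pow_add (m : ℕ) :
    ∑ j ∈ range (m + 1), m.choose j * 2 ^ (m + j) = 6 ^ m := by
  have h3 : ∑ j ∈ range (m + 1), m.choose j * 2 ^ j = 3 ^ m := by
    rw [show 3 = 2 + 1 from rfl, add_pow]
    exact sum_congr rfl fun j _ => by rw [one_pow, mul_one, mul_comm, Nat.cast_id]
  calc ∑ j ∈ range (m + 1), m.choose j * 2 ^ (m + j)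
      = 2 ^ m * ∑ j ∈ range (m + 1), m.choose j * 2 ^ j := by
        rw [mul_sum]; exact sum_congr rfl fun j _ => by ring
    _ = 6 ^ m := by rw [h3, ← mul_pow]; norm_num

lemma Fintype.card_filter_forall_equiv_apply {α ι β : Type*} [Fintype α] [Fintype ι]
    [DecidableEq ι] [Fintype β] (e : α ≃ (ι → β)) (Q : β → Prop) [DecidablePred Q] :
    #{x | ∀ i, Q (e x i)} = Fintype.card {b // Q b} ^ Fintype.card ι := by
  rw [← Fintype.card_subtype,
    Fintype.card_congr ((e.subtypeEquiv fun _ => Iff.rfl).trans Equiv.subtypePiEquivPi),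
    Fintype.card_pi, prod_const, card_univ]

lemma addEnergy_image_of_injective {p : ℕ} {α : Type*} [Fintype α] {f : α → ZMod p}
    (hf : Function.Injective f) :
    addEnergy p (univ.image f) =
      #{x : (α × α) × α × α | f x.1.1 + f x.1.2 = f x.2.1 + f x.2.2} := by
  symm
  refine card_nbij (fun x => (f x.1.1, f x.1.2, f x.2.1, f x.2.2)) ?_ ?_ ?_
  · intro x hx
    simpa using hx
  · intro x _ y _ h
    simp only [Prod.mk.injEq, hf.eq_iff] at h
    ext <;> simp [h]
  · rintro ⟨_, _, _, _⟩ hy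
    simp only [coe_filter, mem_product, mem_image, mem_univ, true_and, Set.mem_ofPred_eq] at hy
    obtain ⟨⟨⟨a, rfl⟩, ⟨b, rfl⟩, ⟨c, rfl⟩, ⟨d, rfl⟩⟩, h⟩ := hy
    exact ⟨((a, b), c, d), by simpa using h, rfl⟩

section SubsetSums

variable {ι R : Type*} [DecidableEq ι]

/-- The coefficient vector `γ` of `(t₀ + Σ_{i∈S} tᵢ) + (t₀ + Σ_{i∈T} tᵢ)` in the GAP `B`. -/
def pairMultiplicity (S T : Finset ι) (i : ι) : Fin 3 :=
  ⟨(decide (i ∈ S)).toNat + (decide (i ∈ T)).toNat,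
    Nat.lt_succ_of_le (add_le_add (Bool.toNat_le _) (Bool.toNat_le _))⟩

lemma pairMultiplicity_eq_iff {S T S' T' : Finset ι} :
    pairMultiplicity S T = pairMultiplicity S' T' ↔
      ∀ i, (decide (i ∈ S)).toNat + (decide (i ∈ T)).toNat
        = (decide (i ∈ S')).toNat + (decide (i ∈ T')).toNat := by
  simp [funext_iff, pairMultiplicity, Fin.ext_iff]

lemma pairMultiplicity_self_injective :
    Function.Injective (fun S : Finset ι => pairMultiplicity S S) := by
  intro S S' h
  ext i
  have := pairMultiplicity_eq_iff.1 h i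
  by_cases hS : i ∈ S <;> by_cases hS' : i ∈ S' <;> simp_all

variable [Fintype ι]

def quadrupleEquiv :
    (Finset ι × Finset ι) × Finset ι × Finset ι ≃ (ι → (Bool × Bool) × Bool × Bool) where
  toFun S i := ((i ∈ S.1.1, i ∈ S.1.2), i ∈ S.2.1, i ∈ S.2.2)
  invFun f := ((univ.filter (f · |>.1.1), univ.filter (f · |>.1.2)),
    univ.filter (f · |>.2.1), univ.filter (f · |>.2.2))
  left_inv S := by ext <;> simp
  right_inv f := by funext; simp

lemma card_filter_pairMultiplicity_eq :
    #{S : (Finset ι × Finset ι) × Finset ι × Finset ι |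
      pairMultiplicity S.1.1 S.1.2 = pairMultiplicity S.2.1 S.2.2} = 6 ^ Fintype.card ι := by
  -- `1 + 2 * 2 + 1` solutions, according as both sides are `0`, `1` or `2`
  have hsix : Fintype.card {q : (Bool × Bool) × Bool × Bool //
      q.1.1.toNat + q.1.2.toNat = q.2.1.toNat + q.2.2.toNat} = 6 := by decide
  simp_rw [pairMultiplicity_eq_iff]
  rw [← hsix]
  exact Fintype.card_filter_forall_equiv_apply quadrupleEquiv
    (fun q => q.1.1.toNat + q.1.2.toNat = q.2.1.toNat + q.2.2.toNat)

variable [Semiring R]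

def offsetSubsetSum (t₀ : R) (t : ι → R) (S : Finset ι) : R := t₀ + ∑ i ∈ S, t i

lemma sum_eq_sum_toNat_mul (t : ι → R) (S : Finset ι) :
    ∑ i ∈ S, t i = ∑ i, ((decide (i ∈ S)).toNat : R) * t i := by
  simp [Bool.toNat, Bool.cond_decide, Nat.cast_ite, ite_mul, sum_ite_mem]

lemma offsetSubsetSum_add_offsetSubsetSum (t₀ : R) (t : ι → R) (S T : Finset ι) :
    offsetSubsetSum t₀ t S + offsetSubsetSum t₀ t T =
      2 * t₀ + ∑ i, ((pairMultiplicity S T i : ℕ) : R) * t i := by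
  simp only [pairMultiplicity, Nat.cast_add, add_mul, sum_add_distrib, ← sum_eq_sum_toNat_mul]
  rw [offsetSubsetSum, offsetSubsetSum, two_mul]
  abel

variable {t₀ : R} {t : ι → R}

lemma offsetSubsetSum_add_offsetSubsetSum_eq_iff
    (hB : Function.Injective fun γ : ι → Fin 3 => 2 * t₀ + ∑ i, ((γ i : ℕ) : R) * t i)
    {S T S' T' : Finset ι} :
    offsetSubsetSum t₀ t S + offsetSubsetSum t₀ t T =
        offsetSubsetSum t₀ t S' + offsetSubsetSum t₀ t T' ↔
      pairMultiplicity S T = pairMultiplicity S' T' := by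
  simp_rw [offsetSubsetSum_add_offsetSubsetSum]
  exact hB.eq_iff

lemma offsetSubsetSum_injective
    (hB : Function.Injective fun γ : ι → Fin 3 => 2 * t₀ + ∑ i, ((γ i : ℕ) : R) * t i) :
    Function.Injective (offsetSubsetSum t₀ t) := fun _ _ h =>
  pairMultiplicity_self_injective ((offsetSubsetSum_add_offsetSubsetSum_eq_iff hB).1 (by rw [h]))

end SubsetSums

theorem quadruple_count_eq_general (p m : ℕ)
    (t₀ : ZMod p) (t : Fin m → ZMod p)
    (hB : Function.Injective (fun γ : Fin m → Fin 3 =>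
      2 * t₀ + ∑ i, ((γ i : ℕ) : ZMod p) * t i)) :
    ((Finset.univ :
        Finset ((Finset (Fin m) × Finset (Fin m)) × Finset (Fin m) × Finset (Fin m))).filter
        (fun S => (t₀ + ∑ i ∈ S.1.1, t i) + (t₀ + ∑ i ∈ S.1.2, t i)
          = (t₀ + ∑ i ∈ S.2.1, t i) + (t₀ + ∑ i ∈ S.2.2, t i))).card
      = ∑ j ∈ Finset.range (m + 1), m.choose j * 2 ^ (m + j)
    ∧ ((Finset.univ :
        Finset ((Finset (Fin m) × Finset (Fin m)) × Finset (Fin m) × Finset (Fin m))).filter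
        (fun S => (t₀ + ∑ i ∈ S.1.1, t i) + (t₀ + ∑ i ∈ S.1.2, t i)
          = (t₀ + ∑ i ∈ S.2.1, t i) + (t₀ + ∑ i ∈ S.2.2, t i))).card
      = 6 ^ m
    ∧ addEnergy p (Finset.image (fun S : Finset (Fin m) => t₀ + ∑ i ∈ S, t i)
        Finset.univ) = 6 ^ m := by
  have hcount : #{S : (Finset (Fin m) × Finset (Fin m)) × Finset (Fin m) × Finset (Fin m) |
      offsetSubsetSum t₀ t S.1.1 + offsetSubsetSum t₀ t S.1.2 =
        offsetSubsetSum t₀ t S.2.1 + offsetSubsetSum t₀ t S.2.2} = 6 ^ m := by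
    simp_rw [offsetSubsetSum_add_offsetSubsetSum_eq_iff hB]
    rw [card_filter_pairMultiplicity_eq, Fintype.card_fin]
  refine ⟨by rw [sum_range_choose_mul_two_pow_add]; exact hcount, hcount, ?_⟩
  rw [← hcount]
  exact addEnergy_image_of_injective (offsetSubsetSum_injective hB)

/-- If the GAP `B = {2t₀ + Σᵢ γᵢtᵢ : γᵢ ∈ {0,1,2}}` is proper, then the number of ordered
quadruples `(S₁,S₂,S₃,S₄)` of subsets of `{1,…,m}` with
`(t₀+Σ_{i∈S₁}tᵢ) + (t₀+Σ_{i∈S₂}tᵢ) = (t₀+Σ_{i∈S₃}tᵢ) + (t₀+Σ_{i∈S₄}tᵢ)` equals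
`Σ_{j=0}^m C(m,j)·2^{m+j} = 6^m`; equivalently, the additive energy of
`A = {t₀ + Σ_{i∈S} tᵢ : S ⊆ {1,…,m}}` equals `6^m`. -/
theorem quadruple_count_eq (p m : ℕ) (hp : p.Prime)
    (t₀ : ZMod p) (t : Fin m → ZMod p)
    (hB : Function.Injective (fun γ : Fin m → Fin 3 =>
      2 * t₀ + ∑ i, ((γ i : ℕ) : ZMod p) * t i)) :
    ((Finset.univ :
        Finset ((Finset (Fin m) × Finset (Fin m)) × Finset (Fin m) × Finset (Fin m))).filter
        (fun S => (t₀ + ∑ i ∈ S.1.1, t i) + (t₀ + ∑ i ∈ S.1.2, t i)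
          = (t₀ + ∑ i ∈ S.2.1, t i) + (t₀ + ∑ i ∈ S.2.2, t i))).card
      = ∑ j ∈ Finset.range (m + 1), m.choose j * 2 ^ (m + j)
    ∧ ((Finset.univ :
        Finset ((Finset (Fin m) × Finset (Fin m)) × Finset (Fin m) × Finset (Fin m))).filter
        (fun S => (t₀ + ∑ i ∈ S.1.1, t i) + (t₀ + ∑ i ∈ S.1.2, t i)
          = (t₀ + ∑ i ∈ S.2.1, t i) + (t₀ + ∑ i ∈ S.2.2, t i))).card
      = 6 ^ m
    ∧ addEnergy p (Finset.image (fun S : Finset (Fin m) => t₀ + ∑ i ∈ S, t i)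
        Finset.univ) = 6 ^ m :=
  quadruple_count_eq_general p m t₀ t hB
end

section
/- Let p be a prime, t₀ ∈ ℤ_p, and t : {1,…,m} → ℤ_p, and suppose the map (γ₁,…,γ_m) ∈ {0,1,2}^m ↦ 2t₀ + Σᵢ γᵢtᵢ ∈ ℤ_p is injective. Let A = { t₀ + Σ_{i∈S} tᵢ : S ⊆ {1,…,m} } ⊆ ℤ_p. Then the additive energy satisfies E(A, A) ≤ 2^{3m}. -/
/-- If the GAP `B = {2t₀ + Σᵢ γᵢtᵢ : γᵢ ∈ {0,1,2}}` is proper, then the additive energy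
of `A = {t₀ + Σ_{i∈S} tᵢ : S ⊆ {1,…,m}}` satisfies `E(A,A) ≤ 2^{3m}`. -/
theorem addEnergy_le (p m : ℕ) (hp : p.Prime)
    (t₀ : ZMod p) (t : Fin m → ZMod p)
    (hB : Function.Injective (fun γ : Fin m → Fin 3 =>
      2 * t₀ + ∑ i, ((γ i : ℕ) : ZMod p) * t i)) :
    addEnergy p (Finset.image (fun S : Finset (Fin m) => t₀ + ∑ i ∈ S, t i)
      Finset.univ) ≤ 2 ^ (3 * m) := by
  classical
  set f : Finset (Fin m) → ZMod p := fun S => t₀ + ∑ i ∈ S, t i with hf_def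
  have key : ∀ S : Finset (Fin m),
      (fun γ : Fin m → Fin 3 => 2 * t₀ + ∑ i, ((γ i : ℕ) : ZMod p) * t i)
        (fun i => if i ∈ S then 1 else 0) = t₀ + f S := by
    intro S
    simp only
    have h' : ∀ i ∈ Finset.univ,
        ((((if i ∈ S then (1 : Fin 3) else 0) : Fin 3) : ℕ) : ZMod p) * t i
          = if i ∈ S then t i else 0 := by
      intro i _; split <;> simp
    rw [Finset.sum_congr rfl h', Finset.sum_ite_mem,
      Finset.univ_inter, hf_def]
    ring
  have hf : Function.Injective f := by
    intro S T h
    have h2 : (fun γ : Fin m → Fin 3 => 2 * t₀ + ∑ i, ((γ i : ℕ) : ZMod p) * t i)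
        (fun i => if i ∈ S then 1 else 0)
        = (fun γ : Fin m → Fin 3 => 2 * t₀ + ∑ i, ((γ i : ℕ) : ZMod p) * t i)
        (fun i => if i ∈ T then 1 else 0) := by
      rw [key S, key T, h]
    have := hB h2
    ext i
    have hi := congrFun this i
    by_cases hS : i ∈ S <;> by_cases hT : i ∈ T <;> simp_all
  set A := Finset.image f Finset.univ with hA
  set g : ZMod p → Finset (Fin m) := Function.invFun f with hg_def
  have hg : ∀ a ∈ A, f (g a) = a := by
    intro a ha
    obtain ⟨S, _, hS⟩ := Finset.mem_image.mp ha
    exact Function.invFun_eq ⟨S, hS⟩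
  unfold addEnergy
  have hcard : ((A ×ˢ A ×ˢ A ×ˢ A).filter
      (fun x => x.1 + x.2.1 = x.2.2.1 + x.2.2.2)).card
      ≤ (Finset.univ : Finset (Finset (Fin m) × Finset (Fin m) × Finset (Fin m))).card := by
    apply Finset.card_le_card_of_injOn (fun x => (g x.1, g x.2.1, g x.2.2.1))
      (fun _ _ => Finset.mem_univ _)
    rintro ⟨a, b, c, d⟩ hx ⟨a', b', c', d'⟩ hy hxy
    simp only [Finset.mem_coe, Finset.mem_filter, Finset.mem_product] at hx hy
    obtain ⟨⟨ha, hb, hc, hd⟩, hsum⟩ := hx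
    obtain ⟨⟨ha', hb', hc', hd'⟩, hsum'⟩ := hy
    simp only [Prod.mk.injEq] at hxy
    obtain ⟨h1, h2, h3⟩ := hxy
    have e1 : a = a' := by rw [← hg a ha, ← hg a' ha', h1]
    have e2 : b = b' := by rw [← hg b hb, ← hg b' hb', h2]
    have e3 : c = c' := by rw [← hg c hc, ← hg c' hc', h3]
    have e4 : d = d' := by
      have : c + d = c' + d' := by rw [← hsum, ← hsum', e1, e2]
      rw [e3] at this
      exact add_left_cancel this
    simp [e1, e2, e3, e4]
  refine hcard.trans ?_
  simp only [Finset.card_univ, Fintype.card_prod, Fintype.card_finset, Fintype.card_fin]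
  rw [← pow_add, ← pow_add]
  apply Nat.pow_le_pow_right (by norm_num)
  omega
end
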